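/- arXiv:2506.09223 — 2 statements merged into one kernel-verified Lean document; each statement's English description precedes it below -/
import Mathlib

section
/- Let V be a finite vertex set partitioned into two communities V¹ and V², let 0 < b_n < a_n < 1, and let G = (V, E) be a simple graph on V with adjacency matrix A. For a configuration σ: V → {-1,1} define the SBM likelihood p_G(σ) := ∏_{u<v} [ a_n^{A_{uv}} (1-a_n)^{1-A_{uv}} 𝟙{σ(u)=σ(v)} + b_n^{A_{uv}} (1-b_n)^{1-A_{uv}} 𝟙{σ(u)≠σ(v)} ], and let ρ_n := [log(1-a_n) - log(1-b_n)] / [log(b_n(1-a_n)) - log(a_n(1-b_n))]. Then the set of configurations maximizing σ ↦ p_G(σ) equals the set of configurations minimizing σ ↦ -(1/2) Σ_{(u,v): u∼v} σ(u)σ(v) + (ρ_n/2) (Σ_{u∈V} σ(u))², where the first sum ranges over ordered pairs of adjacent vertices (so each edge is counted twice). -/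
/-!
For a spin configuration `τ` each factor of the likelihood is the exponential of an affine
function of `τ u * τ v`, so `log p_G τ` is affine in the pair sums `∑_{u<v} τ u τ v` and
`∑_{u<v, u∼v} τ u τ v`. The first is `((∑ τ)² - n) / 2`, and `ρ` is chosen exactly so that
`log p_G τ = C - (α / 2) F τ`, with `α = log (a (1 - b)) - log (b (1 - a)) > 0` as `b < a`.
Hence `p_G` and `F` have the same extremal configurations, maxima for one being minima for
the other.
-/

open Finset Real

section PairSums

variable {ι M : Type*} [Fintype ι] [LinearOrder ι] [AddCommMonoid M]

theorem sum_sum_eq_sum_diag_add_two_nsmul_sum_lt (f : ι → ι → M) (hf : ∀ u v, f u v = f v u) :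
    ∑ u, ∑ v, f u v = ∑ u, f u u + 2 • ∑ u, ∑ v ∈ univ.filter (u < ·), f u v := by
  have split : ∀ u v, f u v = (if v < u then f u v else 0) + (if u = v then f u v else 0)
      + (if u < v then f u v else 0) := by
    intro u v
    rcases lt_trichotomy u v with h | rfl | h
    · simp [h, h.ne, h.not_gt]
    · simp
    · simp [h, h.ne', h.not_gt]
  have below : ∑ u, ∑ v ∈ univ.filter (· < u), f u v = ∑ u, ∑ v ∈ univ.filter (u < ·), f u v := by
    simp only [sum_filter]
    rw [sum_comm]
    simp only [hf]
  rw [sum_congr rfl fun u _ => sum_congr rfl fun v _ => split u v]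
  simp only [sum_add_distrib, sum_ite_eq, mem_univ, if_true, ← sum_filter]
  rw [below, two_nsmul]
  abel

theorem sq_sum_eq_sum_sq_add_two_mul_sum_lt {R : Type*} [CommSemiring R] (τ : ι → R) :
    (∑ u, τ u) ^ 2 = ∑ u, τ u ^ 2 + 2 * ∑ u, ∑ v ∈ univ.filter (u < ·), τ u * τ v := by
  rw [sq, sum_mul_sum, sum_sum_eq_sum_diag_add_two_nsmul_sum_lt _ fun u v => mul_comm _ _,
    nsmul_eq_mul, Nat.cast_ofNat]
  simp only [sq]

theorem SimpleGraph.sum_sum_neighborFinset_eq_two_nsmul_sum_lt (G : SimpleGraph ι)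
    [DecidableRel G.Adj] (g : ι → ι → M) (hg : ∀ u v, g u v = g v u) :
    ∑ u, ∑ v ∈ G.neighborFinset u, g u v
      = 2 • ∑ u, ∑ v ∈ univ.filter (u < ·), if G.Adj u v then g u v else 0 := by
  simp only [neighborFinset_eq_filter, sum_filter]
  rw [sum_sum_eq_sum_diag_add_two_nsmul_sum_lt]
  · simp [sum_filter]
  · intro u v
    simp only [G.adj_comm u v, hg u v]

end PairSums

theorem ite_eq_exp_of_sign {x y p q : ℝ} (hx : x = 1 ∨ x = -1) (hy : y = 1 ∨ y = -1)
    (hp : 0 < p) (hq : 0 < q) :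
    (if x = y then p else q) = exp ((log p + log q + x * y * (log p - log q)) / 2) := by
  rcases hx with rfl | rfl <;> rcases hy with rfl | rfl <;> norm_num <;>
    first
      | rw [exp_log hp]
      | (conv_lhs => rw [← exp_log hq]); congr 1; ring

def spinConfigs (ι : Type*) : Set (ι → ℝ) := {τ | ∀ w, τ w = 1 ∨ τ w = -1}

noncomputable def sbmLikelihood {ι : Type*} [Fintype ι] [LinearOrder ι] (G : SimpleGraph ι)
    [DecidableRel G.Adj] (a b : ℝ) (τ : ι → ℝ) : ℝ :=
  ∏ u, ∏ v ∈ univ.filter (u < ·),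
    if τ u = τ v then (if G.Adj u v then a else 1 - a) else (if G.Adj u v then b else 1 - b)

noncomputable def isingEnergy {ι : Type*} [Fintype ι] (G : SimpleGraph ι) [DecidableRel G.Adj]
    (ρ : ℝ) (τ : ι → ℝ) : ℝ :=
  -(1 / 2) * ∑ u, ∑ v ∈ G.neighborFinset u, τ u * τ v + ρ / 2 * (∑ u, τ u) ^ 2

noncomputable def logOddsRatio (a b : ℝ) : ℝ := log (a * (1 - b)) - log (b * (1 - a))

theorem logOddsRatio_pos {a b : ℝ} (hb0 : 0 < b) (hba : b < a) (ha1 : a < 1) :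
    0 < logOddsRatio a b := by
  rw [logOddsRatio, sub_pos]
  apply log_lt_log (by nlinarith)
  nlinarith

theorem log_ite_sub_log_ite (p : Prop) [Decidable p] {a b : ℝ} (ha0 : 0 < a) (ha1 : a < 1)
    (hb0 : 0 < b) (hb1 : b < 1) :
    log (if p then a else 1 - a) - log (if p then b else 1 - b)
      = log (1 - a) - log (1 - b) + if p then logOddsRatio a b else 0 := by
  have : 0 < 1 - a := sub_pos.2 ha1
  have : 0 < 1 - b := sub_pos.2 hb1
  split_ifs
  · rw [logOddsRatio, log_mul, log_mul] <;> first | positivity | ring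
  · ring

theorem sbmLikelihood_eq_exp_isingEnergy {ι : Type*} [Fintype ι] [LinearOrder ι]
    (G : SimpleGraph ι) [DecidableRel G.Adj] {a b ρ : ℝ} (ha0 : 0 < a) (ha1 : a < 1)
    (hb0 : 0 < b) (hb1 : b < 1) (hρ : logOddsRatio a b * ρ = log (1 - b) - log (1 - a)) :
    ∃ C, ∀ τ ∈ spinConfigs ι,
      sbmLikelihood G a b τ = exp (C - logOddsRatio a b / 2 * isingEnergy G ρ τ) := by
  set α := logOddsRatio a b
  set β := log (1 - a) - log (1 - b)
  set ℓa : ι → ι → ℝ := fun u v => log (if G.Adj u v then a else 1 - a)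
  set ℓb : ι → ι → ℝ := fun u v => log (if G.Adj u v then b else 1 - b)
  refine ⟨∑ u, ∑ v ∈ univ.filter (u < ·), (ℓa u v + ℓb u v) / 2 - β * Fintype.card ι / 4,
    fun τ hτ => ?_⟩
  have pair : ∀ u v,
      (if τ u = τ v then (if G.Adj u v then a else 1 - a) else (if G.Adj u v then b else 1 - b))
        = exp ((ℓa u v + ℓb u v) / 2 + β / 2 * (τ u * τ v)
            + α / 2 * (if G.Adj u v then τ u * τ v else 0)) := by
    intro u v
    rw [ite_eq_exp_of_sign (hτ u) (hτ v) (by split_ifs <;> linarith) (by split_ifs <;> linarith),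
      log_ite_sub_log_ite _ ha0 ha1 hb0 hb1]
    congr 1
    simp only [ℓa, ℓb, α, β]
    split_ifs <;> ring
  have hsq : (∑ u, τ u) ^ 2 = Fintype.card ι + 2 * ∑ u, ∑ v ∈ univ.filter (u < ·), τ u * τ v := by
    have : ∀ u, τ u ^ 2 = 1 := fun u => by rcases hτ u with h | h <;> simp [h]
    simp [sq_sum_eq_sum_sq_add_two_mul_sum_lt, this]
  have hnbr := G.sum_sum_neighborFinset_eq_two_nsmul_sum_lt (fun u v => τ u * τ v)
    fun _ _ => mul_comm _ _
  have hsplit : ∑ u, ∑ v ∈ univ.filter (u < ·), ((ℓa u v + ℓb u v) / 2 + β / 2 * (τ u * τ v)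
        + α / 2 * (if G.Adj u v then τ u * τ v else 0))
      = ∑ u, ∑ v ∈ univ.filter (u < ·), (ℓa u v + ℓb u v) / 2
        + β / 2 * ∑ u, ∑ v ∈ univ.filter (u < ·), τ u * τ v
        + α / 2 * ∑ u, ∑ v ∈ univ.filter (u < ·), (if G.Adj u v then τ u * τ v else 0) := by
    simp only [sum_add_distrib, mul_sum]
  simp only [sbmLikelihood, pair, ← exp_sum]
  congr 1
  rw [hsplit, isingEnergy, hsq, hnbr, two_nsmul]
  linear_combination (Fintype.card ι + 2 * ∑ u, ∑ v ∈ univ.filter (u < ·), τ u * τ v) / 4 * hρ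

theorem isMaxOn_iff_isMinOn_of_eq_strictAnti_comp {α β γ : Type*} [Preorder β] [LinearOrder γ]
    {p : α → β} {f : α → γ} {g : γ → β} {S : Set α} (hg : StrictAnti g)
    (hp : ∀ x ∈ S, p x = g (f x)) {σ : α} (hσ : σ ∈ S) : IsMaxOn p S σ ↔ IsMinOn f S σ := by
  simp only [isMaxOn_iff, isMinOn_iff]
  exact forall₂_congr fun x hx => by rw [hp x hx, hp σ hσ, hg.le_iff_ge]

/-- The maximizers of the SBM likelihood `p_G` among spin configurations
are exactly the minimizers of
`σ ↦ -(1/2) Σ_{(u,v): u∼v} σ(u)σ(v) + (ρ_n/2)(Σ_u σ(u))²`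
(the first sum ranging over ordered pairs of adjacent vertices). -/
theorem mle_equals_ising_minimizer
    {N : ℕ} (G : SimpleGraph (Fin N)) [DecidableRel G.Adj]
    (an bn : ℝ) (hbn : 0 < bn) (hba : bn < an) (han : an < 1)
    (A : Fin N → Fin N → ℕ)
    (hA : ∀ u v : Fin N, A u v = if G.Adj u v then 1 else 0)
    (pG : (Fin N → ℝ) → ℝ)
    (hpG : ∀ σ : Fin N → ℝ,
      pG σ = ∏ u : Fin N, ∏ v ∈ Finset.univ.filter fun v => u < v,
        (an ^ A u v * (1 - an) ^ (1 - A u v) * (if σ u = σ v then 1 else 0)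
          + bn ^ A u v * (1 - bn) ^ (1 - A u v) * (if σ u = σ v then 0 else 1)))
    (ρn : ℝ)
    (hρn : ρn = (Real.log (1 - an) - Real.log (1 - bn))
        / (Real.log (bn * (1 - an)) - Real.log (an * (1 - bn))))
    (F : (Fin N → ℝ) → ℝ)
    (hF : ∀ σ : Fin N → ℝ,
      F σ = -(1 / 2) * (∑ u : Fin N, ∑ v ∈ G.neighborFinset u, σ u * σ v)
        + ρn / 2 * (∑ u : Fin N, σ u) ^ 2)
    (σ : Fin N → ℝ) (hσ : ∀ w : Fin N, σ w = 1 ∨ σ w = -1) :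
    (∀ τ : Fin N → ℝ, (∀ w : Fin N, τ w = 1 ∨ τ w = -1) → pG τ ≤ pG σ)
      ↔ (∀ τ : Fin N → ℝ, (∀ w : Fin N, τ w = 1 ∨ τ w = -1) → F σ ≤ F τ) := by
  have hpG_eq : ∀ τ, pG τ = sbmLikelihood G an bn τ := fun τ => by
    rw [hpG, sbmLikelihood]
    refine prod_congr rfl fun u _ => prod_congr rfl fun v _ => ?_
    rw [hA]
    split_ifs <;> simp
  have hα : 0 < logOddsRatio an bn := logOddsRatio_pos hbn hba han
  have hρ : logOddsRatio an bn * ρn = log (1 - bn) - log (1 - an) := by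
    rw [hρn, show log (bn * (1 - an)) - log (an * (1 - bn)) = -logOddsRatio an bn by
      rw [logOddsRatio]; ring]
    field_simp
    ring
  obtain ⟨C, hC⟩ :=
    sbmLikelihood_eq_exp_isingEnergy G (hbn.trans hba) han hbn (hba.trans han) hρ
  have hanti : StrictAnti fun t => exp (C - logOddsRatio an bn / 2 * t) := fun s t hst =>
    exp_lt_exp.2 (sub_lt_sub_left (mul_lt_mul_of_pos_left hst (half_pos hα)) C)
  have hpF : ∀ τ ∈ spinConfigs (Fin N), pG τ = exp (C - logOddsRatio an bn / 2 * F τ) :=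
    fun τ hτ => by rw [hpG_eq, hC τ hτ, hF τ, isingEnergy]
  exact isMaxOn_iff.symm.trans
    ((isMaxOn_iff_isMinOn_of_eq_strictAnti_comp hanti hpF hσ).trans isMinOn_iff)
end

section
/- Let a > b > 0, v¹, v² > 0, α ∈ ℝ satisfy condition (★): v¹ ≥ v² and, if v¹ > v², (b v¹ - a v²)/(v¹ - v²) < α < (a v¹ - b v²)/(v¹ - v²) (α arbitrary if v¹ = v²). Fix η ∈ (0,1] and let z∞¹(t) := 1 + (η-1)e^{-t}, z∞²(t) := -z∞¹(t). Let ζ > 0 satisfy min{L¹(z∞(0)), -L²(z∞(0))} > ζ. Then there exists θ > 0 such that for every t ≥ 0, every ξ ∈ (0,1), and every w ∈ ℝ², if max_{k=1,2} |w^k - z∞^k(t)| ≤ θ and (ξ + max_{k=1,2} |w^k - z∞^k(t)|) e^{t} ≤ 1 - η, then w ∈ A(ζ,ξ). -/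
/-- Under condition (★): if `ζ > 0` is below
`min{L¹(z∞(0)), -L²(z∞(0))}`, then there is `θ > 0` such that any point `w` that is
`θ`-close to the mean-field trajectory at time `t` and satisfies
`(ξ + max_k |w^k - z∞^k(t)|) e^t ≤ 1 - η` belongs to `A(ζ,ξ)`. -/
theorem close_to_meanfield_implies_in_A
    (a b α v1 v2 η ζ : ℝ)
    (hb : 0 < b) (hab : b < a)
    (hv1 : 0 < v1) (hv2 : 0 < v2) (hv : v2 ≤ v1)
    (hα : v2 < v1 →
      (b * v1 - a * v2) / (v1 - v2) < α ∧ α < (a * v1 - b * v2) / (v1 - v2))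
    (hη : η ∈ Set.Ioc (0 : ℝ) 1)
    (z1 : ℝ → ℝ) (hz1 : ∀ t : ℝ, z1 t = 1 + (η - 1) * Real.exp (-t))
    (L1 L2 : ℝ → ℝ → ℝ)
    (hL1 : ∀ x y : ℝ, L1 x y = (a - α) * v1 * x + (b - α) * v2 * y)
    (hL2 : ∀ x y : ℝ, L2 x y = (b - α) * v1 * x + (a - α) * v2 * y)
    (hζ : 0 < ζ)
    (hζ0 : ζ < min (L1 (z1 0) (-(z1 0))) (-(L2 (z1 0) (-(z1 0))))) :
    ∃ θ : ℝ, 0 < θ ∧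
      ∀ t : ℝ, 0 ≤ t → ∀ ξ : ℝ, ξ ∈ Set.Ioo (0 : ℝ) 1 → ∀ w : ℝ × ℝ,
        max |w.1 - z1 t| |w.2 - (-(z1 t))| ≤ θ →
        (ξ + max |w.1 - z1 t| |w.2 - (-(z1 t))|) * Real.exp t ≤ 1 - η →
          (-1 + ξ ≤ w.1 ∧ w.1 ≤ 1 - ξ)
          ∧ (-1 + ξ ≤ w.2 ∧ w.2 ≤ 1 - ξ)
          ∧ ζ ≤ min (L1 w.1 w.2) (-(L2 w.1 w.2)) := by
  obtain ⟨hη0, hη1⟩ := hη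
  have hz10 : z1 0 = η := by rw [hz1]; simp
  set C1 : ℝ := (a - α) * v1 - (b - α) * v2 with hC1def
  set C2 : ℝ := (a - α) * v2 - (b - α) * v1 with hC2def
  have hζ1 : ζ < C1 * η := by
    have h := (lt_min_iff.mp hζ0).1
    rw [hL1, hz10] at h
    have : (a - α) * v1 * η + (b - α) * v2 * (-η) = C1 * η := by rw [hC1def]; ring
    linarith
  have hζ2 : ζ < C2 * η := by
    have h := (lt_min_iff.mp hζ0).2
    rw [hL2, hz10] at h
    have : -((b - α) * v1 * η + (a - α) * v2 * (-η)) = C2 * η := by rw [hC2def]; ring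
    linarith
  have hC1pos : 0 < C1 := by nlinarith
  have hC2pos : 0 < C2 := by nlinarith
  set M : ℝ := |a - α| * v1 + |b - α| * v2 + |a - α| * v2 + |b - α| * v1 + 1 with hMdef
  have hM : 0 < M := by positivity
  refine ⟨min ((C1 * η - ζ) / M) ((C2 * η - ζ) / M), by
    apply lt_min <;> [exact div_pos (by linarith) hM; exact div_pos (by linarith) hM], ?_⟩
  intro t ht ξ hξ w hwθ hwe
  set d : ℝ := max |w.1 - z1 t| |w.2 - -z1 t| with hddef
  have hw1 : |w.1 - z1 t| ≤ d := le_max_left _ _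
  have hw2 : |w.2 + z1 t| ≤ d := by
    rw [show w.2 + z1 t = w.2 - -z1 t by ring]
    exact le_max_right _ _
  have hd0 : 0 ≤ d := le_trans (abs_nonneg _) hw1
  have he : (0:ℝ) < Real.exp t := Real.exp_pos t
  have hzt : z1 t = 1 + (η - 1) * Real.exp (-t) := hz1 t
  have hene : (0:ℝ) < Real.exp (-t) := Real.exp_pos _
  have he1 : Real.exp (-t) ≤ 1 := by
    have := Real.exp_le_exp.mpr (neg_nonpos.mpr ht)
    simpa [Real.exp_zero] using this
  have hz_ge : η ≤ z1 t := by rw [hzt]; nlinarith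
  have hz_le : z1 t ≤ 1 := by rw [hzt]; nlinarith
  -- key inequality : ξ + d ≤ 1 - z1 t
  have hkey : ξ + d ≤ 1 - z1 t := by
    have hexp : Real.exp (-t) * Real.exp t = 1 := by
      rw [← Real.exp_add]; simp
    have h1 : (1 - z1 t) * Real.exp t = 1 - η := by
      rw [hzt]
      have h2 : (1 - (1 + (η - 1) * Real.exp (-t))) * Real.exp t
          = (1 - η) * (Real.exp (-t) * Real.exp t) := by ring
      rw [h2, hexp, mul_one]
    have : (ξ + d) * Real.exp t ≤ (1 - z1 t) * Real.exp t := by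
      rw [h1]; exact hwe
    exact le_of_mul_le_mul_right this he
  have hw1' := abs_le.mp hw1
  have hw2' := abs_le.mp hw2
  have hξ0 := hξ.1
  refine ⟨⟨by linarith, by linarith⟩, ⟨by linarith, by linarith⟩, ?_⟩
  -- the linear bounds
  have hdθ : d ≤ min ((C1 * η - ζ) / M) ((C2 * η - ζ) / M) := hwθ
  have hMd1 : M * d ≤ C1 * η - ζ := by
    have h := le_trans hdθ (min_le_left _ _)
    have := (le_div_iff₀ hM).mp h
    linarith
  have hMd2 : M * d ≤ C2 * η - ζ := by
    have h := le_trans hdθ (min_le_right _ _)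
    have := (le_div_iff₀ hM).mp h
    linarith
  have habs1 : |(a - α) * v1 * (w.1 - z1 t)| ≤ |a - α| * v1 * d := by
    rw [abs_mul, abs_mul, abs_of_pos hv1]
    exact mul_le_mul_of_nonneg_left hw1 (by positivity)
  have habs2 : |(b - α) * v2 * (w.2 + z1 t)| ≤ |b - α| * v2 * d := by
    rw [abs_mul, abs_mul, abs_of_pos hv2]
    exact mul_le_mul_of_nonneg_left hw2 (by positivity)
  have habs3 : |(b - α) * v1 * (w.1 - z1 t)| ≤ |b - α| * v1 * d := by
    rw [abs_mul, abs_mul, abs_of_pos hv1]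
    exact mul_le_mul_of_nonneg_left hw1 (by positivity)
  have habs4 : |(a - α) * v2 * (w.2 + z1 t)| ≤ |a - α| * v2 * d := by
    rw [abs_mul, abs_mul, abs_of_pos hv2]
    exact mul_le_mul_of_nonneg_left hw2 (by positivity)
  have hn1 := neg_abs_le ((a - α) * v1 * (w.1 - z1 t))
  have hn2 := neg_abs_le ((b - α) * v2 * (w.2 + z1 t))
  have hp3 := le_abs_self ((b - α) * v1 * (w.1 - z1 t))
  have hp4 := le_abs_self ((a - α) * v2 * (w.2 + z1 t))
  have hz1C : C1 * η ≤ C1 * z1 t := mul_le_mul_of_nonneg_left hz_ge hC1pos.le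
  have hz2C : C2 * η ≤ C2 * z1 t := mul_le_mul_of_nonneg_left hz_ge hC2pos.le
  have hrest : 0 ≤ (|a - α| * v2 + |b - α| * v1 + 1) * d := by positivity
  have hrest2 : 0 ≤ (|a - α| * v1 + |b - α| * v2 + 1) * d := by positivity
  refine le_min ?_ ?_
  · have hdecomp : L1 w.1 w.2 =
        C1 * z1 t + (a - α) * v1 * (w.1 - z1 t) + (b - α) * v2 * (w.2 + z1 t) := by
      rw [hL1, hC1def]; ring
    have hMexp : M * d = (|a - α| * v1 + |b - α| * v2) * d
        + (|a - α| * v2 + |b - α| * v1 + 1) * d := by rw [hMdef]; ring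
    have hA : -(|a - α| * v1 * d) ≤ (a - α) * v1 * (w.1 - z1 t) := le_trans (neg_le_neg habs1) hn1
    have hB : -(|b - α| * v2 * d) ≤ (b - α) * v2 * (w.2 + z1 t) := le_trans (neg_le_neg habs2) hn2
    have e1 : (|a - α| * v1 + |b - α| * v2) * d = |a - α| * v1 * d + |b - α| * v2 * d := by ring
    linarith
  · have hdecomp : -(L2 w.1 w.2) =
        C2 * z1 t - (b - α) * v1 * (w.1 - z1 t) - (a - α) * v2 * (w.2 + z1 t) := by
      rw [hL2, hC2def]; ring
    have hMexp : M * d = (|b - α| * v1 + |a - α| * v2) * d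
        + (|a - α| * v1 + |b - α| * v2 + 1) * d := by rw [hMdef]; ring
    have hA : (b - α) * v1 * (w.1 - z1 t) ≤ |b - α| * v1 * d := le_trans hp3 habs3
    have hB : (a - α) * v2 * (w.2 + z1 t) ≤ |a - α| * v2 * d := le_trans hp4 habs4
    have e1 : (|b - α| * v1 + |a - α| * v2) * d = |b - α| * v1 * d + |a - α| * v2 * d := by ring
    linarith
end
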